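/- arXiv:2202.05458 — 2 statements merged into one kernel-verified Lean document; each statement's English description precedes it below -/
import Mathlib

section
/- If k : X × X → ℝ is a positive semidefinite kernel, then the pointwise exponential exp ∘ k, defined by (x, y) ↦ exp(k(x, y)), is also a positive semidefinite kernel. -/
def IsPSDKernel {X : Type*} (k : X → X → ℝ) : Prop :=
  (∀ x y, k x y = k y x) ∧
  ∀ (n : ℕ) (x : Fin n → X) (c : Fin n → ℝ),
    0 ≤ ∑ i, ∑ j, c i * c j * k (x i) (x j)

/-!
Expanding `exp (k x y) = ∑ₘ k x y ^ m / m!`, each entrywise power `k ^ m` is a positive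
semidefinite kernel by the Schur product theorem, positive multiples of such kernels are again
positive semidefinite, and positive semidefiniteness passes to pointwise sums of series.
-/

open Finset Matrix

namespace IsPSDKernel

variable {X : Type*} {k l : X → X → ℝ}

theorem iff_posSemidef :
    IsPSDKernel k ↔ ∀ (n : ℕ) (x : Fin n → X), (of fun i j => k (x i) (x j)).PosSemidef := by
  have quadForm : ∀ {n : ℕ} (x : Fin n → X) (c : Fin n → ℝ),
      star c ⬝ᵥ ((of fun i j => k (x i) (x j)) *ᵥ c) = ∑ i, ∑ j, c i * c j * k (x i) (x j) := by
    intro n x c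
    simp only [dotProduct, mulVec, of_apply, star_trivial, mul_sum]
    exact sum_congr rfl fun i _ => sum_congr rfl fun j _ => by ring
  simp only [posSemidef_iff_dotProduct_mulVec, quadForm]
  constructor
  · rintro ⟨hsymm, hquad⟩ n x
    exact ⟨ext fun i j => by simp [hsymm (x i) (x j)], hquad n x⟩
  · intro h
    refine ⟨fun x y => ?_, fun n x => (h n x).2⟩
    simpa using congrFun₂ (h 2 ![y, x]).1 0 1

theorem mul (hk : IsPSDKernel k) (hl : IsPSDKernel l) :
    IsPSDKernel (fun x y => k x y * l x y) :=
  iff_posSemidef.2 fun n x => (iff_posSemidef.1 hk n x).hadamard (iff_posSemidef.1 hl n x)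

theorem one : IsPSDKernel (fun _ _ : X => (1 : ℝ)) := by
  refine ⟨fun _ _ => rfl, fun n x c => ?_⟩
  have : ∑ i, ∑ j, c i * c j * 1 = (∑ i, c i) ^ 2 := by
    simp only [mul_one, sq, sum_mul_sum]
  rw [this]
  positivity

theorem pow (hk : IsPSDKernel k) (m : ℕ) : IsPSDKernel (fun x y => k x y ^ m) := by
  induction m with
  | zero => simpa using one
  | succ m ih => simpa [pow_succ] using ih.mul hk

theorem const_mul (hk : IsPSDKernel k) {a : ℝ} (ha : 0 ≤ a) :
    IsPSDKernel (fun x y => a * k x y) := by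
  refine ⟨fun x y => congrArg (a * ·) (hk.1 x y), fun n x c => ?_⟩
  have : ∑ i, ∑ j, c i * c j * (a * k (x i) (x j)) = a * ∑ i, ∑ j, c i * c j * k (x i) (x j) := by
    simp only [mul_sum]
    exact sum_congr rfl fun i _ => sum_congr rfl fun j _ => by ring
  rw [this]
  exact mul_nonneg ha (hk.2 n x c)

theorem of_hasSum {f : ℕ → X → X → ℝ} (hf : ∀ m, IsPSDKernel (f m))
    (hk : ∀ x y, HasSum (fun m => f m x y) (k x y)) : IsPSDKernel k := by
  refine ⟨fun x y => (hk x y).unique ?_, fun n x c => ?_⟩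
  · simpa only [(hf _).1 y x] using hk y x
  · have : HasSum (fun m => ∑ i, ∑ j, c i * c j * f m (x i) (x j))
        (∑ i, ∑ j, c i * c j * k (x i) (x j)) :=
      hasSum_sum fun i _ => hasSum_sum fun j _ => (hk (x i) (x j)).mul_left _
    exact this.nonneg fun m => (hf m).2 n x c

end IsPSDKernel

theorem exp_of_psd_kernel_is_psd {X : Type*} (k : X → X → ℝ)
    (hk : IsPSDKernel k) :
    IsPSDKernel (fun x y => Real.exp (k x y)) := by
  have hterm : ∀ m : ℕ, IsPSDKernel (fun x y => (m.factorial : ℝ)⁻¹ * k x y ^ m) :=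
    fun m => (hk.pow m).const_mul (by positivity)
  refine IsPSDKernel.of_hasSum hterm fun x y => ?_
  simpa [Real.exp_eq_exp_ℝ, div_eq_inv_mul] using NormedSpace.expSeries_div_hasSum_exp (k x y)
end

section
/- With the Kronecker delta kernel on Z as above, the CCL-K weighted estimate ∑_j W_{ji} e^{f(x_i, y_j)} with W = (K_Z + λI)⁻¹K_Z equals (n_k/(n_k + λ)) times the empirical average of e^{f(x_i, y_j)} over all j with z_j = z_i (where n_k is the number of such j); hence as λ → 0⁺ it recovers exactly the within-group average used by explicit conditional sampling. -/
/-!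
Write `K` for the delta-kernel Gram matrix and `N = diag (n_{z j})` for the group sizes. Since
`K² = K N`, the matrix `K (N + λ)⁻¹` solves `(K + λ) X = K`. As `K = Pᴴ P` with `P` the
label-indicator matrix, `K` is positive semidefinite, so `K + λ` is invertible for `λ > 0` and
`(K + λ)⁻¹ K = K (N + λ)⁻¹`: column `i` is the indicator of the group of `i`, scaled by
`1 / (n_{z i} + λ)`. Summing against `e^{f(x_i, ·)}` and letting `λ → 0⁺` gives the group
average.
-/

open Finset Filter Topology

namespace Matrix

variable {ι Z R : Type*} [DecidableEq Z]

def deltaKernel [Zero R] [One R] (z : ι → Z) : Matrix ι ι R :=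
  of fun i j => if z i = z j then 1 else 0

def labelIndicator [Zero R] [One R] (z : ι → Z) : Matrix Z ι R :=
  of fun k j => if z j = k then 1 else 0

lemma deltaKernel_eq_conjTranspose_mul_self [Fintype Z] [Semiring R] [StarRing R] (z : ι → Z) :
    deltaKernel (R := R) z = (labelIndicator (R := R) z)ᴴ * labelIndicator (R := R) z := by
  ext i j
  simp only [deltaKernel, labelIndicator, mul_apply, conjTranspose_apply, of_apply]
  split_ifs <;> simp_all [eq_comm]

lemma posSemidef_deltaKernel [Fintype ι] [Fintype Z] [CommRing R] [PartialOrder R] [StarRing R]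
    [StarOrderedRing R] (z : ι → Z) : (deltaKernel z : Matrix ι ι R).PosSemidef := by
  rw [deltaKernel_eq_conjTranspose_mul_self]
  exact posSemidef_conjTranspose_mul_self _

variable [Fintype ι] [DecidableEq ι]

def labelCount (z : ι → Z) (k : Z) : ℕ :=
  (univ.filter fun j => z j = k).card

lemma deltaKernel_mul_self [Semiring R] (z : ι → Z) :
    (deltaKernel z : Matrix ι ι R) * deltaKernel z =
      deltaKernel z * diagonal fun j => (labelCount z (z j) : R) := by
  ext i j
  rw [mul_diagonal, mul_apply]
  by_cases h : z i = z j
  · simp +contextual [deltaKernel, labelCount, h, eq_comm, sum_boole]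
  · simp +contextual [deltaKernel, h]

lemma deltaKernel_add_smul_one_mul_deltaKernel_mul_diagonal [Field R] (z : ι → Z) {l : R}
    (hl : ∀ j, (labelCount z (z j) : R) + l ≠ 0) :
    (deltaKernel z + l • 1) *
        (deltaKernel z * diagonal fun j => ((labelCount z (z j) : R) + l)⁻¹) =
      deltaKernel z := by
  set n : ι → R := fun j => (labelCount z (z j) : R)
  have hinv : (diagonal n + l • 1) * diagonal (fun j => (n j + l)⁻¹) = 1 := by
    rw [smul_one_eq_diagonal, diagonal_add, diagonal_mul_diagonal, ← diagonal_one]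
    exact congrArg diagonal (funext fun j => mul_inv_cancel₀ (hl j))
  have hsmul : l • (deltaKernel z : Matrix ι ι R) = deltaKernel z * (l • 1) := by
    rw [Matrix.mul_smul, mul_one]
  rw [← mul_assoc, add_mul, deltaKernel_mul_self, smul_one_mul, hsmul, ← mul_add, mul_assoc,
    hinv, mul_one]

lemma isUnit_deltaKernel_add_smul_one [Fintype Z] (z : ι → Z) {l : ℝ} (hl : 0 < l) :
    IsUnit (deltaKernel z + l • 1 : Matrix ι ι ℝ) :=
  (PosDef.posSemidef_add (posSemidef_deltaKernel z) (PosDef.one.smul hl)).isUnit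

lemma inv_deltaKernel_add_smul_one_mul_deltaKernel [Fintype Z] (z : ι → Z) {l : ℝ}
    (hl : 0 < l) :
    (deltaKernel z + l • 1 : Matrix ι ι ℝ)⁻¹ * deltaKernel z =
      deltaKernel z * diagonal fun j => ((labelCount z (z j) : ℝ) + l)⁻¹ := by
  have hA := (isUnit_iff_isUnit_det _).mp (isUnit_deltaKernel_add_smul_one z hl)
  have hmul := deltaKernel_add_smul_one_mul_deltaKernel_mul_diagonal z (l := l)
    fun j => by positivity
  calc _ = (deltaKernel z + l • 1 : Matrix ι ι ℝ)⁻¹ * ((deltaKernel z + l • 1) *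
        (deltaKernel z * diagonal fun j => ((labelCount z (z j) : ℝ) + l)⁻¹)) := by
        rw [hmul]
    _ = _ := nonsing_inv_mul_cancel_left _ _ hA

lemma sum_inv_deltaKernel_add_smul_one_mul_deltaKernel_mul [Fintype Z] (z : ι → Z) {l : ℝ}
    (hl : 0 < l) (i : ι) (g : ι → ℝ) :
    ∑ j, ((deltaKernel z + l • 1)⁻¹ * deltaKernel z : Matrix ι ι ℝ) j i * g j =
      (∑ j ∈ univ.filter fun j => z j = z i, g j) / ((labelCount z (z i) : ℝ) + l) := by
  rw [inv_deltaKernel_add_smul_one_mul_deltaKernel z hl, sum_filter, sum_div]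
  refine sum_congr rfl fun j _ => ?_
  rw [mul_diagonal]
  split_ifs with h <;> simp [deltaKernel, h, div_eq_inv_mul, mul_comm]

end Matrix

theorem cclk_delta_kernel_recovers_group_average_general {b m : ℕ}
    (z : Fin b → Fin m) (f : Fin b → Fin b → ℝ)
    (K : Matrix (Fin b) (Fin b) ℝ)
    (hK : ∀ i j, K i j = if z i = z j then 1 else 0) :
    ∀ i : Fin b,
      (∀ l : ℝ, 0 < l →
        ∑ j, ((K + l • (1 : Matrix (Fin b) (Fin b) ℝ))⁻¹ * K) j i *
            Real.exp (f i j) =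
          (((Finset.univ.filter fun j => z j = z i).card : ℝ) /
              (((Finset.univ.filter fun j => z j = z i).card : ℝ) + l)) *
            ((1 / ((Finset.univ.filter fun j => z j = z i).card : ℝ)) *
              ∑ j ∈ Finset.univ.filter fun j => z j = z i, Real.exp (f i j))) ∧
      Tendsto
        (fun l : ℝ =>
          ∑ j, ((K + l • (1 : Matrix (Fin b) (Fin b) ℝ))⁻¹ * K) j i *
            Real.exp (f i j))
        (𝓝[>] 0)
        (𝓝 ((1 / ((Finset.univ.filter fun j => z j = z i).card : ℝ)) *
          ∑ j ∈ Finset.univ.filter fun j => z j = z i, Real.exp (f i j))) := by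
  obtain rfl : K = Matrix.deltaKernel z := Matrix.ext hK
  intro i
  set n : ℝ := ((univ.filter fun j => z j = z i).card : ℝ)
  set S : ℝ := ∑ j ∈ univ.filter fun j => z j = z i, Real.exp (f i j)
  have hn : n ≠ 0 := Nat.cast_ne_zero.mpr (card_pos.mpr ⟨i, by simp⟩).ne'
  have hweighted : ∀ l : ℝ, 0 < l →
      ∑ j, ((Matrix.deltaKernel z + l • 1)⁻¹ * Matrix.deltaKernel z :
        Matrix (Fin b) (Fin b) ℝ) j i * Real.exp (f i j) = S / (n + l) :=
    fun l hl => Matrix.sum_inv_deltaKernel_add_smul_one_mul_deltaKernel_mul z hl i _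
  refine ⟨fun l hl => by rw [hweighted l hl]; field_simp, ?_⟩
  have hlim : Tendsto (fun l : ℝ => S / (n + l)) (𝓝 0) (𝓝 (S / (n + 0))) :=
    tendsto_const_nhds.div (tendsto_const_nhds.add tendsto_id) (by rwa [add_zero])
  rw [add_zero, ← one_div_mul_eq_div] at hlim
  exact (hlim.mono_left nhdsWithin_le_nhds).congr'
    (eventually_nhdsWithin_of_forall fun l hl => (hweighted l hl).symm)

theorem cclk_delta_kernel_recovers_group_average {b m : ℕ}
    (z : Fin b → Fin m) (f : Fin b → Fin b → ℝ)
    (hn : ∀ k : Fin m, 1 ≤ (Finset.univ.filter fun j => z j = k).card)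
    (K : Matrix (Fin b) (Fin b) ℝ)
    (hK : ∀ i j, K i j = if z i = z j then 1 else 0) :
    ∀ i : Fin b,
      (∀ l : ℝ, 0 < l →
        ∑ j, ((K + l • (1 : Matrix (Fin b) (Fin b) ℝ))⁻¹ * K) j i *
            Real.exp (f i j) =
          (((Finset.univ.filter fun j => z j = z i).card : ℝ) /
              (((Finset.univ.filter fun j => z j = z i).card : ℝ) + l)) *
            ((1 / ((Finset.univ.filter fun j => z j = z i).card : ℝ)) *
              ∑ j ∈ Finset.univ.filter fun j => z j = z i, Real.exp (f i j))) ∧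
      Tendsto
        (fun l : ℝ =>
          ∑ j, ((K + l • (1 : Matrix (Fin b) (Fin b) ℝ))⁻¹ * K) j i *
            Real.exp (f i j))
        (𝓝[>] 0)
        (𝓝 ((1 / ((Finset.univ.filter fun j => z j = z i).card : ℝ)) *
          ∑ j ∈ Finset.univ.filter fun j => z j = z i, Real.exp (f i j))) :=
  cclk_delta_kernel_recovers_group_average_general z f K hK
end
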